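/- arXiv:math/0107219 — 3 statements merged into one kernel-verified Lean document; each statement's English description precedes it below -/
import Mathlib

section
/- The function u ↦ −ρ'(u)/ρ(u) is increasing on (1, ∞), where ρ is the Dickman–de Bruijn function. -/
open Set MeasureTheory intervalIntegral Filter

set_option linter.unusedSectionVars false
set_option maxHeartbeats 1000000

namespace Dickman5

lemma intInt_of_bdd {f : ℝ → ℝ} (hf : Measurable f) {C a b : ℝ}
    (h : ∀ x ∈ Set.uIcc a b, |f x| ≤ C) : IntervalIntegrable f volume a b := by
  refine (_root_.intervalIntegrable_const (c := C)).mono_fun' hf.aestronglyMeasurable.restrict ?_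
  refine (ae_restrict_iff' measurableSet_uIoc).2 (ae_of_all _ fun x hx => ?_)
  simpa [Real.norm_eq_abs] using h x (uIoc_subset_uIcc hx)

variable {ρ : ℝ → ℝ}

lemma rho_measurable (hcont : ContinuousOn ρ (Set.Ici 0))
    (hneg : ∀ u : ℝ, u < 0 → ρ u = 0) : Measurable ρ := by
  apply measurable_of_continuousOn_compl_singleton (0 : ℝ)
  intro x hx
  rcases lt_or_gt_of_ne (fun h : x = 0 => hx h) with hlt | hgt
  · have : Set.EqOn ρ (fun _ => (0:ℝ)) (Iio 0) := fun y hy => hneg y hy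
    exact (continuousOn_const.congr this).continuousAt (Iio_mem_nhds hlt) |>.continuousWithinAt
  · exact (hcont.continuousAt (Ici_mem_nhds hgt)).continuousWithinAt

lemma rho_contAt (hcont : ContinuousOn ρ (Set.Ici 0)) {x : ℝ} (hx : 0 < x) :
    ContinuousAt ρ x := hcont.continuousAt (Ici_mem_nhds hx)

lemma rho_intInt (hcont : ContinuousOn ρ (Set.Ici 0))
    (hneg : ∀ u : ℝ, u < 0 → ρ u = 0) (a b : ℝ) :
    IntervalIntegrable ρ volume a b := by
  have hK : IsCompact (Icc (0:ℝ) (max (max a b) 1)) := isCompact_Icc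
  obtain ⟨C, hC⟩ : ∃ C, ∀ x ∈ Icc (0:ℝ) (max (max a b) 1), |ρ x| ≤ C := by
    obtain ⟨C, hC⟩ := hK.exists_bound_of_continuousOn
      ((continuous_abs.comp_continuousOn (hcont.mono (Icc_subset_Ici_self))))
    exact ⟨C, fun x hx => by simpa [Real.norm_eq_abs] using hC x hx⟩
  have hC0 : (0:ℝ) ≤ C := le_trans (abs_nonneg _) (hC 0 ⟨le_refl _, le_trans zero_le_one (le_max_right _ _)⟩)
  refine intInt_of_bdd (rho_measurable hcont hneg) (C := C) fun x hx => ?_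
  rcases lt_or_ge x 0 with h0 | h0
  · simp [hneg x h0, hC0]
  · refine hC x ⟨h0, ?_⟩
    rcases uIcc_subset_uIcc_iff_le.1 (le_refl (uIcc a b)) with _
    calc x ≤ max a b := by
            rcases Set.mem_uIcc.1 hx with ⟨_, h⟩ | ⟨_, h⟩
            · exact le_trans h (le_max_right a b)
            · exact le_trans h (le_max_left a b)
      _ ≤ max (max a b) 1 := le_max_left _ _



variable {ρ : ℝ → ℝ}

lemma rho_identity (hcont : ContinuousOn ρ (Set.Ici 0))
    (hneg : ∀ u : ℝ, u < 0 → ρ u = 0)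
    (hinit : ∀ u : ℝ, 0 ≤ u → u ≤ 1 → ρ u = 1)
    (hode : ∀ u : ℝ, 1 < u → HasDerivAt ρ (-ρ (u - 1) / u) u) :
    ∀ u : ℝ, 1 ≤ u → u * ρ u = ∫ x in (u-1)..u, ρ x := by
  set Φ : ℝ → ℝ := fun x => ∫ t in (0:ℝ)..x, ρ t with hΦ
  have hΦc : Continuous Φ := intervalIntegral.continuous_primitive
    (fun a b => rho_intInt hcont hneg a b) 0
  have hΦd : ∀ x : ℝ, 0 < x → HasDerivAt Φ (ρ x) x := fun x hx =>
    integral_hasDerivAt_right (rho_intInt hcont hneg 0 x)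
      ((rho_measurable hcont hneg).stronglyMeasurable.stronglyMeasurableAtFilter)
      (rho_contAt hcont hx)
  set F : ℝ → ℝ := fun u => u * ρ u - (Φ u - Φ (u - 1)) with hF
  have hFc : ∀ x : ℝ, 0 < x → ContinuousAt F x := by
    intro x hx
    exact ((continuousAt_id.mul (rho_contAt hcont hx)).sub
      ((hΦc.continuousAt).sub (hΦc.continuousAt.comp (continuousAt_id.sub continuousAt_const))))
  have hFd : ∀ x : ℝ, 1 < x → HasDerivAt F 0 x := by
    intro x hx
    have hx0 : (0:ℝ) < x := by linarith
    have h1 : HasDerivAt (fun u : ℝ => u * ρ u) (1 * ρ x + x * (-ρ (x-1)/x)) x :=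
      (hasDerivAt_id x).mul (hode x hx)
    have h2 : HasDerivAt Φ (ρ x) x := hΦd x hx0
    have h3 : HasDerivAt (fun u : ℝ => Φ (u - 1)) (ρ (x-1)) x := by
      have := (hΦd (x-1) (by linarith)).comp x ((hasDerivAt_id x).sub_const 1)
      simpa [Function.comp_def] using this
    have := h1.sub (h2.sub h3)
    refine this.congr_deriv ?_
    rw [mul_div_assoc', mul_comm x, mul_div_assoc, div_self hx0.ne']
    ring
  have hF1 : F 1 = 0 := by
    have hρ1 : ρ 1 = 1 := hinit 1 zero_le_one le_rfl
    have hΦ1 : Φ 1 = 1 := by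
      have : ∀ t ∈ Set.uIcc (0:ℝ) 1, ρ t = (fun _ => (1:ℝ)) t := by
        intro t ht
        rw [Set.uIcc_of_le zero_le_one] at ht
        exact hinit t ht.1 ht.2
      rw [hΦ]
      simp only
      rw [intervalIntegral.integral_congr this]
      simp
    have hΦ0 : Φ 0 = 0 := intervalIntegral.integral_same
    show (1:ℝ) * ρ 1 - (Φ 1 - Φ (1-1)) = 0
    norm_num [hρ1, hΦ1, hΦ0]
  intro u hu
  have hFu : F u = 0 := by
    rcases eq_or_lt_of_le hu with rfl | hu1
    · exact hF1
    · have hconst : ∀ c ∈ Ioc (1:ℝ) u, F u = F c := by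
        intro c hc
        have hcu : c ≤ u := hc.2
        have h := constant_of_has_deriv_right_zero (f := F) (a := c) (b := u)
          (fun x hx => (hFc x (by rcases hx with ⟨h1, _⟩; linarith [hc.1])).continuousWithinAt)
          (fun x hx => (hFd x (lt_of_lt_of_le hc.1 hx.1)).hasDerivWithinAt)
        exact h u ⟨hcu, le_rfl⟩
      have ht : Tendsto F (nhdsWithin 1 (Ioi 1)) (nhds (F 1)) :=
        ((hFc 1 one_pos).tendsto).mono_left nhdsWithin_le_nhds
      have he : ∀ᶠ c in nhdsWithin 1 (Ioi 1), F c = F u := by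
        filter_upwards [Ioc_mem_nhdsGT_of_mem ⟨le_rfl, hu1⟩] with c hc
        exact (hconst c hc).symm
      have := tendsto_nhds_unique (ht.congr' he) tendsto_const_nhds
      rw [← this, hF1]
  have hsplit : Φ (u-1) + ∫ x in (u-1)..u, ρ x = Φ u :=
    integral_add_adjacent_intervals (rho_intInt hcont hneg 0 (u-1)) (rho_intInt hcont hneg (u-1) u)
  have : F u = 0 := hFu
  rw [hF] at this
  simp only at this
  linarith

lemma rho_pos (hcont : ContinuousOn ρ (Set.Ici 0))
    (hneg : ∀ u : ℝ, u < 0 → ρ u = 0)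
    (hinit : ∀ u : ℝ, 0 ≤ u → u ≤ 1 → ρ u = 1)
    (hode : ∀ u : ℝ, 1 < u → HasDerivAt ρ (-ρ (u - 1) / u) u) :
    ∀ x : ℝ, 0 ≤ x → 0 < ρ x := by
  by_contra hcon
  push_neg at hcon
  obtain ⟨x₀, hx₀, hρx₀⟩ := hcon
  set A : Set ℝ := {x : ℝ | 1 ≤ x ∧ ρ x ≤ 0} with hA
  have hx₀1 : 1 ≤ x₀ := by
    by_contra h
    push_neg at h
    rw [hinit x₀ hx₀ h.le] at hρx₀
    linarith
  have hne : A.Nonempty := ⟨x₀, hx₀1, hρx₀⟩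
  have hbdd : BddBelow A := ⟨1, fun y hy => hy.1⟩
  set v := sInf A with hv
  have hv1 : 1 ≤ v := le_csInf hne fun y hy => hy.1
  have hvpos : ∀ x : ℝ, 0 ≤ x → x < v → 0 < ρ x := by
    intro x hx hxv
    rcases le_or_gt x 1 with h1 | h1
    · rw [hinit x hx h1]; norm_num
    · by_contra hle
      push_neg at hle
      exact absurd (csInf_le hbdd (⟨h1.le, hle⟩ : x ∈ A)) (not_le.2 hxv)
  have hρv : ρ v ≤ 0 := by
    by_contra hpos
    push_neg at hpos
    have hcv : ContinuousAt ρ v := rho_contAt hcont (by linarith)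
    have hev : ∀ᶠ y in nhds v, 0 < ρ y := hcv.eventually (eventually_gt_nhds hpos)
    rw [Metric.eventually_nhds_iff] at hev
    obtain ⟨ε, hε, hball⟩ := hev
    obtain ⟨a, haA, halt⟩ := exists_lt_of_csInf_lt hne (by linarith : sInf A < v + ε)
    have hva : v ≤ a := csInf_le hbdd haA
    have : 0 < ρ a := hball (by rw [Real.dist_eq, abs_of_nonneg (by linarith)]; linarith)
    linarith [haA.2]
  have hid := rho_identity hcont hneg hinit hode v hv1
  have hpos : 0 < ∫ x in (v-1)..v, ρ x := by
    refine intervalIntegral_pos_of_pos_on (rho_intInt hcont hneg _ _) ?_ (by linarith)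
    intro x hx
    exact hvpos x (by linarith [hx.1]) hx.2
  nlinarith



noncomputable def Q (ρ : ℝ → ℝ) (u : ℝ) : ℝ := ρ (u - 1) / (u * ρ u)

noncomputable def Hf (ρ : ℝ → ℝ) (x : ℝ) : ℝ := if 1 < x then Q ρ x else 0

section QH

variable (hcont : ContinuousOn ρ (Set.Ici 0))
    (hneg : ∀ u : ℝ, u < 0 → ρ u = 0)
    (hinit : ∀ u : ℝ, 0 ≤ u → u ≤ 1 → ρ u = 1)
    (hode : ∀ u : ℝ, 1 < u → HasDerivAt ρ (-ρ (u - 1) / u) u)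

include hcont hneg hinit hode

lemma Q_pos : ∀ u : ℝ, 1 ≤ u → 0 < Q ρ u := by
  intro u hu
  exact div_pos (rho_pos hcont hneg hinit hode _ (by linarith))
    (mul_pos (by linarith) (rho_pos hcont hneg hinit hode _ (by linarith)))

lemma Q_contOn : ContinuousOn (Q ρ) (Set.Ici 1) := by
  apply ContinuousOn.div
  · exact hcont.comp (continuous_id.sub continuous_const).continuousOn
      (fun x (hx : 1 ≤ x) => by simpa using (by linarith : (0:ℝ) ≤ x - 1))
  · exact continuousOn_id.mul (hcont.mono fun x (hx : 1 ≤ x) => by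
      simpa using (by linarith : (0:ℝ) ≤ x))
  · intro x (hx : 1 ≤ x)
    exact ne_of_gt (mul_pos (by linarith)
      (rho_pos hcont hneg hinit hode _ (by linarith)))

lemma H_meas : Measurable (Hf ρ) := by
  have hρ := rho_measurable hcont hneg
  exact Measurable.ite measurableSet_Ioi
    ((hρ.comp (measurable_id.sub_const 1)).div (measurable_id.mul hρ)) measurable_const

lemma H_nonneg : ∀ x : ℝ, 0 ≤ Hf ρ x := by
  intro x
  unfold Hf
  split
  · exact (Q_pos hcont hneg hinit hode x (by linarith)).le
  · exact le_refl 0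

lemma H_bound (B : ℝ) : ∃ C : ℝ, 0 < C ∧ ∀ x : ℝ, x ≤ B → |Hf ρ x| ≤ C := by
  obtain ⟨C₀, hC₀⟩ := (isCompact_Icc (a := (1:ℝ)) (b := max B 1)).exists_bound_of_continuousOn
    ((Q_contOn hcont hneg hinit hode).mono (fun x hx => hx.1))
  refine ⟨max C₀ 1, lt_of_lt_of_le one_pos (le_max_right _ _), fun x hx => ?_⟩
  unfold Hf
  split
  · rename_i h1
    calc |Q ρ x| = ‖Q ρ x‖ := (Real.norm_eq_abs _).symm
      _ ≤ C₀ := hC₀ x ⟨h1.le, le_trans hx (le_max_left _ _)⟩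
      _ ≤ max C₀ 1 := le_max_left _ _
  · simp

lemma H_intInt (a b : ℝ) : IntervalIntegrable (Hf ρ) volume a b := by
  obtain ⟨C, _, hC⟩ := H_bound hcont hneg hinit hode (max a b)
  refine intInt_of_bdd (H_meas hcont hneg hinit hode) (C := C) fun x hx => hC x ?_
  rcases Set.mem_uIcc.1 hx with ⟨_, h⟩ | ⟨_, h⟩
  · exact le_trans h (le_max_right a b)
  · exact le_trans h (le_max_left a b)

lemma log_ftc_ge1 : ∀ a b : ℝ, 1 ≤ a → a ≤ b →
    ∫ x in a..b, Hf ρ x = Real.log (ρ a) - Real.log (ρ b) := by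
  intro a b ha hab
  have hpos := rho_pos hcont hneg hinit hode
  have hc : ContinuousOn (fun x => -Real.log (ρ x)) (Set.Icc a b) := by
    apply ContinuousOn.neg
    apply ContinuousOn.log
    · exact hcont.mono (fun x hx => le_trans (by linarith : (0:ℝ) ≤ a) hx.1)
    · intro x hx
      exact ne_of_gt (hpos x (le_trans (by linarith : (0:ℝ) ≤ a) hx.1))
  have hd : ∀ x ∈ Set.Ioo a b, HasDerivWithinAt (fun x => -Real.log (ρ x)) (Hf ρ x) (Set.Ioi x) x := by
    intro x hx
    have hx1 : (1:ℝ) < x := lt_of_le_of_lt ha hx.1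
    have hρx : ρ x ≠ 0 := ne_of_gt (hpos x (by linarith))
    have hder := ((hode x hx1).log hρx).neg
    have heq : -((-ρ (x-1)/x)/ρ x) = Hf ρ x := by
      unfold Hf Q
      rw [if_pos hx1]
      field_simp
    rw [heq] at hder
    exact hder.hasDerivWithinAt
  have h := integral_eq_sub_of_hasDeriv_right_of_le hab hc hd
    (H_intInt hcont hneg hinit hode a b)
  rw [h]
  ring

lemma ratio : ∀ a b : ℝ, 0 ≤ a → a ≤ b →
    ρ a = ρ b * Real.exp (∫ x in a..b, Hf ρ x) := by
  intro a b ha hab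
  have hpos := rho_pos hcont hneg hinit hode
  have hexp : ∀ c d : ℝ, 1 ≤ c → c ≤ d → ρ c = ρ d * Real.exp (∫ x in c..d, Hf ρ x) := by
    intro c d hc hcd
    rw [log_ftc_ge1 hcont hneg hinit hode c d hc hcd, Real.exp_sub,
      Real.exp_log (hpos c (by linarith)), Real.exp_log (hpos d (by linarith))]
    rw [mul_div_cancel₀ _ (ne_of_gt (hpos d (by linarith)))]
  rcases le_or_gt 1 a with h1 | h1
  · exact hexp a b h1 hab
  rcases le_or_gt b 1 with hb1 | hb1
  · have hz : ∫ x in a..b, Hf ρ x = 0 := by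
      rw [intervalIntegral.integral_congr (g := fun _ => (0:ℝ)) ?_]
      · simp
      · intro x hx
        rw [Set.uIcc_of_le hab] at hx
        exact if_neg (not_lt.2 (le_trans hx.2 hb1))
    rw [hz, hinit a ha h1.le, hinit b (by linarith) hb1]
    simp
  · have hsplit : (∫ x in a..1, Hf ρ x) + ∫ x in (1:ℝ)..b, Hf ρ x = ∫ x in a..b, Hf ρ x :=
      integral_add_adjacent_intervals (H_intInt hcont hneg hinit hode a 1)
        (H_intInt hcont hneg hinit hode 1 b)
    have hz : ∫ x in a..(1:ℝ), Hf ρ x = 0 := by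
      rw [intervalIntegral.integral_congr (g := fun _ => (0:ℝ)) ?_]
      · simp
      · intro x hx
        rw [Set.uIcc_of_le h1.le] at hx
        exact if_neg (not_lt.2 hx.2)
    have h1b := hexp 1 b le_rfl hb1.le
    rw [← hsplit, hz, zero_add, hinit a ha h1.le]
    rw [hinit 1 zero_le_one le_rfl] at h1b
    exact h1b



lemma key : ∀ t : ℝ, 0 < t → ∀ u : ℝ, 1 < u → Q ρ u ≤ Q ρ (u + t) := by
  have hpos := rho_pos hcont hneg hinit hode
  have hQpos := Q_pos hcont hneg hinit hode
  have hQcont := Q_contOn hcont hneg hinit hode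
  have hHnn := H_nonneg hcont hneg hinit hode
  have hIH := H_intInt hcont hneg hinit hode
  have hHmeas := H_meas hcont hneg hinit hode
  intro t ht
  by_contra hcon
  push_neg at hcon
  obtain ⟨u₀, hu₀, hlt₀⟩ := hcon
  set E : Set ℝ := {u : ℝ | 1 < u ∧ Q ρ (u + t) < Q ρ u} with hE
  have hne : E.Nonempty := ⟨u₀, hu₀, hlt₀⟩
  have hbdd : BddBelow E := ⟨1, fun y hy => hy.1.le⟩
  set v := sInf E with hv
  have hv1 : 1 ≤ v := le_csInf hne fun y hy => hy.1.le
  have hnotE : ∀ x : ℝ, x < v → x ∉ E := fun x hx hxE =>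
    absurd (csInf_le hbdd hxE) (not_le.2 hx)
  -- the shift defect
  set Δ : ℝ → ℝ := fun x => max (Hf ρ x - Hf ρ (x + t)) 0 with hΔ
  have hΔnn : ∀ x, 0 ≤ Δ x := fun x => le_max_right _ _
  have hΔ0 : ∀ x : ℝ, x ≤ v → Δ x = 0 := by
    intro x hx
    apply max_eq_right
    rw [sub_nonpos]
    rcases le_or_gt x 1 with h1 | h1
    · rw [show Hf ρ x = if 1 < x then Q ρ x else 0 from rfl, if_neg (not_lt.2 h1)]
      exact hHnn (x + t)
    · have hQle : Q ρ x ≤ Q ρ (x + t) := by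
        rcases lt_or_eq_of_le hx with hxv | heq
        · have := hnotE x hxv
          rw [hE] at this
          simp only [Set.mem_setOf_eq, not_and, not_lt] at this
          exact this h1
        · -- x = v : limit argument from the left
          have h1x := h1
          by_contra hqq
          push_neg at hqq
          have cQ : ContinuousAt (Q ρ) x := hQcont.continuousAt (Ici_mem_nhds h1)
          have cQt : ContinuousAt (fun y => Q ρ (y + t)) x :=
            ContinuousAt.comp (hQcont.continuousAt (Ici_mem_nhds (by linarith)))
              (continuousAt_id.add continuousAt_const)
          have cSub : ContinuousAt (fun y => Q ρ y - Q ρ (y + t)) x := cQ.sub cQt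
          have h0 : (0:ℝ) < Q ρ x - Q ρ (x + t) := by linarith
          have hpre := cSub (Ioi_mem_nhds h0)
          have hev : ∀ᶠ y in nhds x, 0 < Q ρ y - Q ρ (y + t) := by
            filter_upwards [hpre] with y hy
            simpa using hy
          have hev2 : ∀ᶠ y in nhds x, 1 < y := eventually_gt_nhds h1
          have hcomb : ∀ᶠ y in nhdsWithin x (Iio x), y ∈ E ∧ y < x := by
            filter_upwards [(hev.and hev2).filter_mono nhdsWithin_le_nhds,
              eventually_mem_nhdsWithin] with y hy hy2
            exact ⟨⟨hy.2, by linarith [hy.1]⟩, hy2⟩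
          obtain ⟨y, hyE, hyx⟩ := hcomb.exists
          exact hnotE y (heq ▸ hyx) hyE
      rw [show Hf ρ x = if 1 < x then Q ρ x else 0 from rfl, if_pos h1,
        show Hf ρ (x+t) = if 1 < x+t then Q ρ (x+t) else 0 from rfl,
        if_pos (by linarith : (1:ℝ) < x + t)]
      exact hQle
  obtain ⟨C, hCpos, hC⟩ := H_bound hcont hneg hinit hode (v + 1 + t)
  set δ : ℝ := min 1 (1/(2*C)) with hδ
  have hδpos : 0 < δ := lt_min one_pos (by positivity)
  have hδ1 : δ ≤ 1 := min_le_left _ _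
  have hδC : C * δ ≤ 1/2 := by
    have h2 : δ ≤ 1/(2*C) := min_le_right _ _
    have := mul_le_mul_of_nonneg_left h2 hCpos.le
    calc C * δ ≤ C * (1/(2*C)) := this
      _ = 1/2 := by
        rw [mul_one_div, div_eq_div_iff (by positivity) (by norm_num)]
        ring
  -- integrability of shifted H and Δ
  have hIHt : ∀ a b : ℝ, IntervalIntegrable (fun x => Hf ρ (x + t)) volume a b := by
    intro a b
    obtain ⟨C', _, hC'⟩ := H_bound hcont hneg hinit hode (max a b + t)
    refine intInt_of_bdd (hHmeas.comp (measurable_add_const t)) (C := C') fun x hx => ?_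
    refine hC' (x + t) (add_le_add_left ?_ t)
    rcases Set.mem_uIcc.1 hx with ⟨_, h⟩ | ⟨_, h⟩
    · exact le_trans h (le_max_right a b)
    · exact le_trans h (le_max_left a b)
  have hIΔ : ∀ a b : ℝ, IntervalIntegrable Δ volume a b := by
    intro a b
    obtain ⟨C', hC'pos, hC'⟩ := H_bound hcont hneg hinit hode (max a b)
    refine intInt_of_bdd ((hHmeas.sub (hHmeas.comp (measurable_add_const t))).max
      measurable_const) (C := C') fun x hx => ?_
    have hxb : x ≤ max a b := by
      rcases Set.mem_uIcc.1 hx with ⟨_, h⟩ | ⟨_, h⟩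
      · exact le_trans h (le_max_right a b)
      · exact le_trans h (le_max_left a b)
    have h1 : Δ x ≤ C' := by
      apply max_le _ hC'pos.le
      calc Hf ρ x - Hf ρ (x + t) ≤ Hf ρ x := by linarith [hHnn (x+t)]
        _ ≤ |Hf ρ x| := le_abs_self _
        _ ≤ C' := hC' x hxb
    exact (abs_of_nonneg (hΔnn x)).trans_le h1
  -- the sup S over the window
  set Sset : Set ℝ := Δ '' Set.Icc v (v + δ) with hSset
  have hSne : Sset.Nonempty := ⟨Δ v, ⟨v, ⟨le_rfl, by linarith⟩, rfl⟩⟩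
  have hSbddA : BddAbove Sset := by
    refine ⟨C, ?_⟩
    rintro y ⟨x, hx, rfl⟩
    apply max_le _ hCpos.le
    calc Hf ρ x - Hf ρ (x + t) ≤ Hf ρ x := by linarith [hHnn (x+t)]
      _ ≤ |Hf ρ x| := le_abs_self _
      _ ≤ C := hC x (by linarith [hx.2])
  set S := sSup Sset with hS
  have hS0 : 0 ≤ S := by
    have := le_csSup hSbddA (⟨v, ⟨le_rfl, by linarith⟩, rfl⟩ : Δ v ∈ Sset)
    rw [hΔ0 v le_rfl] at this
    exact this
  have hSle : ∀ x ∈ Set.Icc v (v + δ), Δ x ≤ S := fun x hx => le_csSup hSbddA ⟨x, hx, rfl⟩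
  -- key estimate on the window
  have hkey : ∀ u ∈ Set.Ioc v (v + δ), Δ u ≤ C * δ * S := by
    intro u hu
    have hu1 : 1 < u := lt_of_le_of_lt hv1 hu.1
    have h0u1 : (0:ℝ) ≤ u - 1 := by linarith
    have hu1v : u - 1 ≤ v := by linarith [hu.2, hδ1]
    have hut : (1:ℝ) < u + t := by linarith
    set J := ∫ x in v..u, Δ x with hJ
    have hJ0 : 0 ≤ J := integral_nonneg hu.1.le fun x _ => hΔnn x
    have hJS : J ≤ (u - v) * S := by
      have h := integral_mono_on hu.1.le (hIΔ v u) _root_.intervalIntegrable_const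
        (g := fun _ => S) (fun x hx => hSle x ⟨hx.1, le_trans hx.2 hu.2⟩)
      simpa using h
    have hJδS : J ≤ δ * S := le_trans hJS
      (mul_le_mul_of_nonneg_right (by linarith [hu.2]) hS0)
    -- A - B ≤ J
    have hAB : ∀ s ∈ Set.Icc (0:ℝ) 1,
        (∫ x in (u-1)..(u-1+s), Hf ρ x) - (∫ x in (u+t-1)..(u+t-1+s), Hf ρ x) ≤ J := by
      intro s hs
      have hBshift : (∫ x in (u+t-1)..(u+t-1+s), Hf ρ x)
          = ∫ x in (u-1)..(u-1+s), Hf ρ (x + t) := by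
        rw [intervalIntegral.integral_comp_add_right (f := Hf ρ) (a := u-1) (b := u-1+s) t,
          show u - 1 + t = u + t - 1 by ring, show u - 1 + s + t = u + t - 1 + s by ring]
      rw [hBshift, ← intervalIntegral.integral_sub (hIH _ _) (hIHt _ _)]
      have hmono : (∫ x in (u-1)..(u-1+s), (Hf ρ x - Hf ρ (x+t)))
          ≤ ∫ x in (u-1)..(u-1+s), Δ x :=
        integral_mono_on (by linarith [hs.1]) ((hIH _ _).sub (hIHt _ _)) (hIΔ _ _)
          (fun x _ => le_max_left _ _)
      have hsplit1 : (∫ x in (u-1)..(u-1+s), Δ x) ≤ ∫ x in (u-1)..u, Δ x := by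
        have hadd : (∫ x in (u-1)..(u-1+s), Δ x) + ∫ x in (u-1+s)..u, Δ x
            = ∫ x in (u-1)..u, Δ x :=
          integral_add_adjacent_intervals (hIΔ _ _) (hIΔ _ _)
        have h2 : 0 ≤ ∫ x in (u-1+s)..u, Δ x :=
          integral_nonneg (by linarith [hs.2]) fun x _ => hΔnn x
        linarith
      have hsplit2 : (∫ x in (u-1)..u, Δ x) = J := by
        have hadd : (∫ x in (u-1)..v, Δ x) + ∫ x in v..u, Δ x = ∫ x in (u-1)..u, Δ x :=
          integral_add_adjacent_intervals (hIΔ _ _) (hIΔ _ _)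
        have hz : (∫ x in (u-1)..v, Δ x) = 0 := by
          rw [intervalIntegral.integral_congr (g := fun _ => (0:ℝ))]
          · simp
          · intro x hx
            rw [Set.uIcc_of_le hu1v] at hx
            exact hΔ0 x hx.2
        rw [hJ, ← hadd, hz, zero_add]
      linarith
    -- pointwise inequality in s
    have hpt : ∀ s ∈ Set.Icc (0:ℝ) 1,
        ρ (u+t-1+s) * ρ (u-1) ≤ Real.exp J * (ρ (u-1+s) * ρ (u+t-1)) := by
      intro s hs
      have hA := ratio hcont hneg hinit hode (u-1) (u-1+s) h0u1 (by linarith [hs.1])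
      have hB := ratio hcont hneg hinit hode (u+t-1) (u+t-1+s) (by linarith) (by linarith [hs.1])
      have hexpA : Real.exp (∫ x in (u-1)..(u-1+s), Hf ρ x)
          ≤ Real.exp J * Real.exp (∫ x in (u+t-1)..(u+t-1+s), Hf ρ x) := by
        rw [← Real.exp_add]
        exact Real.exp_le_exp.2 (by linarith [hAB s hs])
      have hp1 : 0 < ρ (u+t-1+s) := hpos _ (by linarith [hs.1])
      have hp2 : 0 < ρ (u-1+s) := hpos _ (by linarith [hs.1])
      calc ρ (u+t-1+s) * ρ (u-1)
          = ρ (u+t-1+s) * (ρ (u-1+s) * Real.exp (∫ x in (u-1)..(u-1+s), Hf ρ x)) := by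
            rw [← hA]
        _ ≤ ρ (u+t-1+s) * (ρ (u-1+s) * (Real.exp J
              * Real.exp (∫ x in (u+t-1)..(u+t-1+s), Hf ρ x))) := by
            apply mul_le_mul_of_nonneg_left (mul_le_mul_of_nonneg_left hexpA hp2.le) hp1.le
        _ = Real.exp J * (ρ (u-1+s) * (ρ (u+t-1+s)
              * Real.exp (∫ x in (u+t-1)..(u+t-1+s), Hf ρ x))) := by ring
        _ = Real.exp J * (ρ (u-1+s) * ρ (u+t-1)) := by rw [← hB]
    -- integrate in s
    have hcont1 : ∀ c : ℝ, 0 ≤ c → ContinuousOn (fun s : ℝ => ρ (c + s)) (Set.uIcc 0 1) := by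
      intro c hc
      apply hcont.comp (continuous_const.add continuous_id).continuousOn
      intro s hsm
      rw [Set.uIcc_of_le zero_le_one] at hsm
      exact (by simp; linarith [hsm.1] : c + s ∈ Set.Ici (0:ℝ))
    have hint1 : IntervalIntegrable (fun s : ℝ => ρ (u+t-1+s)) volume 0 1 :=
      (hcont1 (u+t-1) (by linarith)).intervalIntegrable
    have hint2 : IntervalIntegrable (fun s : ℝ => ρ (u-1+s)) volume 0 1 :=
      (hcont1 (u-1) h0u1).intervalIntegrable
    have hint : (∫ s in (0:ℝ)..1, ρ (u+t-1+s) * ρ (u-1))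
        ≤ ∫ s in (0:ℝ)..1, Real.exp J * (ρ (u-1+s) * ρ (u+t-1)) :=
      integral_mono_on zero_le_one (hint1.mul_const _)
        (((hint2.mul_const _).const_mul _)) hpt
    have hI : ∀ w : ℝ, 1 ≤ w → (∫ s in (0:ℝ)..1, ρ (w - 1 + s)) = w * ρ w := by
      intro w hw
      rw [intervalIntegral.integral_comp_add_left (f := ρ) (a := (0:ℝ)) (b := 1) (w - 1),
        show w - 1 + 0 = w - 1 by ring, show w - 1 + 1 = w by ring]
      exact (rho_identity hcont hneg hinit hode w hw).symm
    rw [intervalIntegral.integral_mul_const, intervalIntegral.integral_const_mul,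
      intervalIntegral.integral_mul_const] at hint
    have hIu : (∫ s in (0:ℝ)..1, ρ (u-1+s)) = u * ρ u := hI u hu1.le
    have hIut : (∫ s in (0:ℝ)..1, ρ (u+t-1+s)) = (u+t) * ρ (u+t) := by
      have := hI (u+t) (by linarith)
      rw [show u + t - 1 = u + t - 1 from rfl] at this
      exact this
    rw [hIu, hIut] at hint
    -- conclude Q u ≤ exp J * Q (u + t)
    have hP1 : 0 < u * ρ u := mul_pos (by linarith) (hpos u (by linarith))
    have hP2 : 0 < (u+t) * ρ (u+t) := mul_pos (by linarith) (hpos (u+t) (by linarith))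
    have hQQ : Q ρ u ≤ Real.exp J * Q ρ (u+t) := by
      rw [show Q ρ u = ρ (u-1) / (u * ρ u) from rfl,
        show Q ρ (u+t) = ρ (u+t-1) / ((u+t) * ρ (u+t)) from rfl,
        mul_div_assoc', div_le_div_iff₀ hP1 hP2]
      ring_nf
      ring_nf at hint
      linarith
    -- Q u - Q (u+t) ≤ Q u * J
    have h3 : Real.exp (-J) * Q ρ u ≤ Q ρ (u+t) := by
      have h := mul_le_mul_of_nonneg_left hQQ (Real.exp_nonneg (-J))
      rw [← mul_assoc, ← Real.exp_add, neg_add_cancel, Real.exp_zero, one_mul] at h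
      exact h
    have h4 : 1 - J ≤ Real.exp (-J) := by linarith [Real.add_one_le_exp (-J)]
    have hQup : 0 < Q ρ u := hQpos u hu1.le
    have h5 := mul_le_mul_of_nonneg_right h4 hQup.le
    have hmain : Q ρ u - Q ρ (u+t) ≤ Q ρ u * J := by nlinarith [h3, h5]
    have hQuC : Q ρ u ≤ C := by
      have : Hf ρ u = Q ρ u := if_pos hu1
      rw [← this]
      exact le_trans (le_abs_self _) (hC u (by linarith [hu.2]))
    have hΔu : Δ u = max (Q ρ u - Q ρ (u+t)) 0 := by
      rw [hΔ]
      simp only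
      rw [show Hf ρ u = if 1 < u then Q ρ u else 0 from rfl, if_pos hu1,
        show Hf ρ (u+t) = if 1 < u+t then Q ρ (u+t) else 0 from rfl, if_pos hut]
    rw [hΔu]
    apply max_le _ (by positivity)
    calc Q ρ u - Q ρ (u+t) ≤ Q ρ u * J := hmain
      _ ≤ C * (δ * S) := mul_le_mul hQuC hJδS hJ0 hCpos.le
      _ = C * δ * S := by ring
  -- conclude S = 0
  have hSle2 : S ≤ C * δ * S := by
    apply csSup_le hSne
    rintro y ⟨x, hx, rfl⟩
    rcases eq_or_lt_of_le hx.1 with heq | hvx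
    · rw [← heq, hΔ0 v le_rfl]
      positivity
    · exact hkey x ⟨hvx, hx.2⟩
  have hSzero : S = 0 := by nlinarith [hS0, hSle2, hδC]
  obtain ⟨e, heE, helt⟩ := exists_lt_of_csInf_lt hne (by linarith : sInf E < v + δ)
  have hve : v ≤ e := csInf_le hbdd heE
  have hΔe : Δ e ≤ S := hSle e ⟨hve, helt.le⟩
  have hΔepos : 0 < Δ e := by
    have he1 : 1 < e := heE.1
    rw [hΔ]
    simp only
    rw [show Hf ρ e = if 1 < e then Q ρ e else 0 from rfl, if_pos he1,
      show Hf ρ (e+t) = if 1 < e+t then Q ρ (e+t) else 0 from rfl,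
      if_pos (by linarith : (1:ℝ) < e + t)]
    exact lt_max_iff.2 (Or.inl (sub_pos.2 heE.2))
  linarith [hSzero ▸ hΔe]



end QH

end Dickman5

theorem stmt_5 (ρ : ℝ → ℝ)
    (hcont : ContinuousOn ρ (Set.Ici 0))
    (hneg : ∀ u : ℝ, u < 0 → ρ u = 0)
    (hinit : ∀ u : ℝ, 0 ≤ u → u ≤ 1 → ρ u = 1)
    (hode : ∀ u : ℝ, 1 < u → HasDerivAt ρ (-ρ (u - 1) / u) u) :
    MonotoneOn (fun u => -deriv ρ u / ρ u) (Set.Ioi 1) := by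
  intro a ha b hb hab
  have ha1 : (1:ℝ) < a := ha
  have hb1 : (1:ℝ) < b := hb
  have hQ : ∀ x : ℝ, 1 < x → -deriv ρ x / ρ x = Dickman5.Q ρ x := by
    intro x hx
    rw [(hode x hx).deriv]
    unfold Dickman5.Q
    ring
  show -deriv ρ a / ρ a ≤ -deriv ρ b / ρ b
  rw [hQ a ha1, hQ b hb1]
  rcases eq_or_lt_of_le hab with rfl | hlt
  · exact le_rfl
  · have h := Dickman5.key hcont hneg hinit hode (b - a) (by linarith) a ha1
    rw [show a + (b - a) = b by ring] at h
    exact h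
end

section
/- For all u > 1, the Dickman–de Bruijn function satisfies −ρ'(u) ≤ ρ(u) · log(2u · (log(u+3))²). -/
open Set Real MeasureTheory intervalIntegral Filter

noncomputable def Lf (x : ℝ) : ℝ := Real.log (2 * x * (Real.log (x + 3)) ^ 2)
noncomputable def lam (w : ℝ) : ℝ := 1/w + 2/((w+3) * Real.log (w+3))

lemma exp_upper (x : ℝ) (h0 : 0 ≤ x) (h1 : x ≤ 1) :
    Real.exp x ≤ 1 + x + x^2/2 + x^3/6 + x^4/24 + x^4/19 := by
  have := Real.exp_bound (x := x) (by rw [abs_of_nonneg h0]; exact h1) (n := 4) (by norm_num)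
  rw [abs_of_nonneg h0] at this
  have h2 := (abs_le.1 this).2
  have hS : (∑ m ∈ Finset.range 4, x ^ m / m.factorial) = 1 + x + x^2/2 + x^3/6 := by
    rw [Finset.sum_range_succ, Finset.sum_range_succ, Finset.sum_range_succ,
      Finset.sum_range_succ, Finset.sum_range_zero]
    norm_num [Nat.factorial]
  rw [hS] at h2
  norm_num [Nat.factorial] at h2
  nlinarith [h2, pow_nonneg h0 4]

lemma log5_ge : (1.55 : ℝ) ≤ Real.log 5 := by
  rw [Real.le_log_iff_exp_le (by norm_num)]
  have h1 : Real.exp 1.55 = Real.exp 1 * Real.exp 0.55 := by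
    rw [← Real.exp_add]; norm_num
  have h2 : Real.exp 0.55 ≤ 1.7381 := by
    have := exp_upper 0.55 (by norm_num) (by norm_num)
    norm_num at this ⊢
    linarith
  have h3 : Real.exp 1 ≤ 2.7182818286 := Real.exp_one_lt_d9.le
  rw [h1]
  calc Real.exp 1 * Real.exp 0.55 ≤ 2.7182818286 * 1.7381 := by
        apply mul_le_mul h3 h2 (Real.exp_nonneg _) (by norm_num)
    _ ≤ 5 := by norm_num

lemma log155_ge : (0.43 : ℝ) ≤ Real.log 1.55 := by
  rw [Real.le_log_iff_exp_le (by norm_num)]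
  have h2 : Real.exp 0.43 ≤ 1.54 := by
    have := exp_upper 0.43 (by norm_num) (by norm_num)
    norm_num at this ⊢
    linarith
  linarith

lemma log_ge_one_sub_inv {x : ℝ} (hx : 0 < x) : 1 - 1/x ≤ Real.log x := by
  have h := Real.log_le_sub_one_of_pos (x := 1/x) (by positivity)
  rw [Real.log_div one_ne_zero (ne_of_gt hx)] at h
  simp only [Real.log_one, one_div] at h
  have : 1/x = x⁻¹ := one_div x
  rw [this]
  linarith

set_option maxHeartbeats 1600000 in
/-- Key numeric inequality for the induction step. -/
lemma key_numeric {w : ℝ} (hw : 2 ≤ w) :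
    (Lf w)^2 < lam w * ((Lf w - 1) * (2*w*(Real.log (w+3))^2) - ((Lf w)^2/2 - 1)) := by
  set l := Real.log (w+3) with hl
  set m := Real.log l with hm
  have hw3 : (5:ℝ) ≤ w + 3 := by linarith
  have hl155 : (1.55:ℝ) ≤ l := le_trans log5_ge (Real.log_le_log (by norm_num) hw3)
  have hl0 : (0:ℝ) < l := by linarith
  have hm43 : (0.43:ℝ) ≤ m := le_trans log155_ge (Real.log_le_log (by norm_num) hl155)
  have hmm : m ≤ l - 1 := Real.log_le_sub_one_of_pos hl0
  have hw0 : (0:ℝ) < w := by linarith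
  have hLsplit : Lf w = Real.log 2 + Real.log w + 2*m := by
    rw [Lf, Real.log_mul (by positivity) (by positivity),
      Real.log_mul (by norm_num) (ne_of_gt hw0), Real.log_pow]
    push_cast
    ring
  have hlog2a : (0.6931:ℝ) ≤ Real.log 2 := by
    have := Real.log_two_gt_d9; linarith
  have hlog2b : Real.log 2 ≤ 0.6932 := by
    have := Real.log_two_lt_d9; linarith
  have hlogw1 : Real.log 2 ≤ Real.log w := Real.log_le_log (by norm_num) hw
  have hlogw2 : Real.log w ≤ l := Real.log_le_log hw0 (by linarith)
  set L := Lf w with hLdef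
  have hL1 : 1.3862 + 2*m ≤ L := by rw [hLsplit]; linarith
  have hL2 : L ≤ l + 0.6932 + 2*m := by rw [hLsplit]; linarith
  -- core reduced inequality
  have core : (2*l^2 + 1.6*l) * (L - 1) > 1.38 * L^2 := by
    nlinarith [mul_nonneg (sub_nonneg.2 hL1) (sub_nonneg.2 hL2),
      mul_nonneg (sub_nonneg.2 hm43) (sub_nonneg.2 hmm),
      mul_nonneg (sub_nonneg.2 hl155) (mul_nonneg (sub_nonneg.2 hm43) (sub_nonneg.2 hmm)),
      mul_nonneg (sub_nonneg.2 hl155) (mul_nonneg (sub_nonneg.2 hL1) (sub_nonneg.2 hL2)),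
      sq_nonneg (l - 1.55), sq_nonneg (m - 0.43), sq_nonneg (L - 2.2462),
      mul_nonneg (sub_nonneg.2 hl155) (sq_nonneg (m - 0.43))]
  -- lam * G = 2l² + 4wl/(w+3)
  have hG : lam w * (2*w*l^2) = 2*l^2 + 4*w*l/(w+3) := by
    rw [lam, ← hl]
    field_simp
    ring
  have hfrac : 4*w*l/(w+3) ≥ 1.6*l := by
    rw [ge_iff_le, le_div_iff₀ (by linarith : (0:ℝ) < w + 3)]
    nlinarith [hl0.le, hw]
  have hlam_pos : 0 < lam w := by
    rw [lam]; positivity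
  have hlam76 : lam w ≤ 0.76 := by
    rw [lam]
    have h1 : 1/w ≤ 1/2 := by
      rw [div_le_div_iff₀ hw0 (by norm_num)]; linarith
    have h2 : 2/((w+3)*l) ≤ 2/(5*1.55) := by
      apply div_le_div_of_nonneg_left (by norm_num) (by norm_num)
      nlinarith [hl155, hw3, hl0]
    have : (2:ℝ)/(5*1.55) ≤ 0.26 := by norm_num
    linarith
  have hLpos : (2.2:ℝ) ≤ L := by linarith [hL1, hm43]
  -- assemble
  have step1 : lam w * ((L-1) * (2*w*l^2)) ≥ (2*l^2 + 1.6*l) * (L - 1) := by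
    have : lam w * ((L-1) * (2*w*l^2)) = (lam w * (2*w*l^2)) * (L-1) := by ring
    rw [this, hG]
    apply mul_le_mul_of_nonneg_right _ (by linarith)
    linarith
  have step2 : lam w * (L^2/2 - 1) ≤ 0.38 * L^2 := by
    have h1 : (0:ℝ) ≤ L^2/2 - 1 := by nlinarith [hLpos]
    calc lam w * (L^2/2 - 1) ≤ 0.76 * (L^2/2 - 1) := mul_le_mul_of_nonneg_right hlam76 h1
      _ ≤ 0.38 * L^2 := by nlinarith
  calc (L)^2 = 1.38 * L^2 - 0.38 * L^2 := by ring
    _ < (2*l^2 + 1.6*l) * (L - 1) - lam w * (L^2/2 - 1) := by linarith [core, step2]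
    _ ≤ lam w * ((L-1) * (2*w*l^2)) - lam w * (L^2/2 - 1) := by linarith [step1]
    _ = lam w * ((L - 1) * (2*w*l^2) - (L^2/2 - 1)) := by ring

/-- Linear lower bound on the growth of Lf: `Lf s ≤ Lf w - (w-s) * lam w`. -/
lemma Lf_linear {w s : ℝ} (hw : 2 ≤ w) (h1 : w - 1 ≤ s) (h2 : s ≤ w) :
    Lf s ≤ Lf w - (w - s) * lam w := by
  have hs1 : (1:ℝ) ≤ s := by linarith
  have hs0 : (0:ℝ) < s := by linarith
  have hw0 : (0:ℝ) < w := by linarith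
  have hls0 : (0:ℝ) < Real.log (s+3) := by
    apply Real.log_pos; linarith
  have hlw0 : (0:ℝ) < Real.log (w+3) := by
    apply Real.log_pos; linarith
  have hsplitw : Lf w = Real.log 2 + Real.log w + 2 * Real.log (Real.log (w+3)) := by
    rw [Lf, Real.log_mul (by positivity) (by positivity),
      Real.log_mul (by norm_num) (ne_of_gt hw0), Real.log_pow]
    push_cast; ring
  have hsplits : Lf s = Real.log 2 + Real.log s + 2 * Real.log (Real.log (s+3)) := by
    rw [Lf, Real.log_mul (by positivity) (by positivity),
      Real.log_mul (by norm_num) (ne_of_gt hs0), Real.log_pow]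
    push_cast; ring
  -- first part : log w - log s ≥ (w-s)/w
  have p1 : (w - s)/w ≤ Real.log w - Real.log s := by
    have h := log_ge_one_sub_inv (x := w/s) (by positivity)
    rw [Real.log_div (ne_of_gt hw0) (ne_of_gt hs0)] at h
    have e1 : 1 - 1/(w/s) = (w - s)/w := by
      field_simp
    rw [e1] at h; exact h
  -- second part : log (w+3) - log (s+3) ≥ (w-s)/(w+3)
  have p2 : (w - s)/(w+3) ≤ Real.log (w+3) - Real.log (s+3) := by
    have h := log_ge_one_sub_inv (x := (w+3)/(s+3)) (by positivity)
    rw [Real.log_div (by positivity) (by positivity)] at h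
    have e1 : 1 - 1/((w+3)/(s+3)) = (w - s)/(w+3) := by
      field_simp
      ring
    rw [e1] at h; exact h
  -- third : log log (w+3) - log log (s+3) ≥ (w-s)/((w+3) * log (w+3))
  have p3 : (w - s)/((w+3) * Real.log (w+3)) ≤
      Real.log (Real.log (w+3)) - Real.log (Real.log (s+3)) := by
    have h := log_ge_one_sub_inv (x := Real.log (w+3)/Real.log (s+3)) (by positivity)
    rw [Real.log_div (ne_of_gt hlw0) (ne_of_gt hls0)] at h
    have e1 : 1 - 1/(Real.log (w+3)/Real.log (s+3))
        = (Real.log (w+3) - Real.log (s+3))/Real.log (w+3) := by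
      field_simp
    rw [e1] at h
    calc (w - s)/((w+3) * Real.log (w+3)) = ((w-s)/(w+3))/Real.log (w+3) := by
          rw [div_div]
      _ ≤ (Real.log (w+3) - Real.log (s+3))/Real.log (w+3) := by
          apply div_le_div_of_nonneg_right p2 hlw0.le
      _ ≤ _ := h
  have hlamval : (w - s) * lam w = (w-s)/w + 2 * ((w - s)/((w+3) * Real.log (w+3))) := by
    rw [lam]; field_simp
  rw [hsplitw, hsplits, hlamval]
  linarith [p1, p3]

/-- Lower bound for Lf on `[1, ∞)`. -/
lemma Lf_lower {u : ℝ} (hu : 1 ≤ u) : Real.log u + 1.2749 ≤ Lf u := by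
  have hu0 : (0:ℝ) < u := by linarith
  have hsplit : Lf u = Real.log 2 + Real.log u + 2 * Real.log (Real.log (u+3)) := by
    rw [Lf, Real.log_mul (by positivity) (by
      have : (0:ℝ) < Real.log (u+3) := Real.log_pos (by linarith)
      positivity), Real.log_mul (by norm_num) (ne_of_gt hu0), Real.log_pow]
    push_cast; ring
  have hlog2a : (0.6931471803:ℝ) ≤ Real.log 2 := Real.log_two_gt_d9.le
  have h4 : Real.log 4 ≤ Real.log (u+3) := Real.log_le_log (by norm_num) (by linarith)
  have h4' : Real.log 4 = 2 * Real.log 2 := by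
    rw [show (4:ℝ) = 2^2 by norm_num, Real.log_pow]; push_cast; ring
  have hll2 : -0.402252 ≤ Real.log (Real.log 2) := by
    have hinv : Real.log (Real.log 2) = - Real.log (1 / Real.log 2) := by
      rw [Real.log_div one_ne_zero (by positivity), Real.log_one]; ring
    have hb : (1:ℝ) / Real.log 2 ≤ 1.4427 := by
      rw [div_le_iff₀ (by positivity)]
      nlinarith [hlog2a]
    have hc : Real.log (1 / Real.log 2) ≤ Real.log 1.4427 :=
      Real.log_le_log (by positivity) hb
    have hd : Real.log 1.4427 ≤ 0.402252 := by
      have e1 : Real.log 1.4427 ≤ 2 * Real.log 1.201126 := by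
        have : (1.4427:ℝ) ≤ 1.201126^2 := by norm_num
        calc Real.log 1.4427 ≤ Real.log (1.201126^2) := Real.log_le_log (by norm_num) this
          _ = 2 * Real.log 1.201126 := by rw [Real.log_pow]; push_cast; ring
      have e2 : Real.log 1.201126 ≤ 0.201126 := by
        have := Real.log_le_sub_one_of_pos (x := (1.201126:ℝ)) (by norm_num)
        linarith
      linarith
    linarith
  have hmono : Real.log (Real.log 4) ≤ Real.log (Real.log (u+3)) := by
    apply Real.log_le_log _ h4
    rw [h4']; positivity
  have hlog22 : Real.log (Real.log 4) = Real.log 2 + Real.log (Real.log 2) := by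
    rw [h4', Real.log_mul (by norm_num) (by positivity)]
  rw [hsplit]
  have : (1.2749:ℝ) ≤ Real.log 2 + 2 * Real.log (Real.log (u+3)) := by
    have := hmono
    rw [hlog22] at this
    nlinarith [hlog2a, hll2]
  linarith

/-- Base-range numeric inequality. -/
lemma base_numeric {u : ℝ} (h1 : 1 < u) (h2 : u ≤ 2) :
    1 ≤ u * ((1 - Real.log u) * Lf u) := by
  set x := Real.log u with hx
  have hx0 : 0 ≤ x := by
    rw [hx]; exact Real.log_nonneg h1.le
  have hx1 : x ≤ 0.69314719 := by
    rw [hx]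
    calc Real.log u ≤ Real.log 2 := Real.log_le_log (by linarith) h2
      _ ≤ 0.69314719 := by linarith [Real.log_two_lt_d9]
  have hux : 1 + x ≤ u := by
    have := Real.add_one_le_exp x
    rw [hx, Real.exp_log (by linarith)] at this
    linarith
  have hLf : x + 1.2749 ≤ Lf u := by
    have := Lf_lower h1.le
    rw [← hx] at this; linarith
  have h1x : (0:ℝ) < 1 - x := by linarith
  have hLf0 : (0:ℝ) < Lf u := by linarith
  calc (1:ℝ) ≤ (1 + x) * ((1 - x) * (x + 1.2749)) := by
        nlinarith [mul_nonneg hx0 (sub_nonneg.2 hx1), sq_nonneg x,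
          mul_nonneg (mul_nonneg hx0 hx0) (sub_nonneg.2 hx1)]
    _ ≤ u * ((1 - x) * (x + 1.2749)) := by
        apply mul_le_mul_of_nonneg_right hux
        positivity
    _ ≤ u * ((1 - x) * Lf u) := by
        apply mul_le_mul_of_nonneg_left _ (by linarith)
        apply mul_le_mul_of_nonneg_left hLf h1x.le



section Dickman

variable {ρ : ℝ → ℝ}
  (hcont : ContinuousOn ρ (Set.Ici 0))
  (hinit : ∀ u : ℝ, 0 ≤ u → u ≤ 1 → ρ u = 1)
  (hode : ∀ u : ℝ, 1 < u → HasDerivAt ρ (-ρ (u - 1) / u) u)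

include hcont in
lemma rho_intInt (a b : ℝ) (ha : 0 ≤ a) (hb : 0 ≤ b) :
    IntervalIntegrable ρ volume a b :=
  (hcont.mono (fun x hx => by
    rcases le_total a b with h | h
    · simp [uIcc_of_le h] at hx; exact le_trans ha hx.1
    · simp [uIcc_of_ge h] at hx; exact le_trans hb hx.1)).intervalIntegrable

include hcont in
lemma rho_contAt {x : ℝ} (hx : 0 < x) : ContinuousAt ρ x :=
  (hcont x hx.le).continuousAt (Ici_mem_nhds hx)

include hcont in
lemma H_hasDeriv {x : ℝ} (hx : 0 < x) :
    HasDerivAt (fun y => ∫ t in (0:ℝ)..y, ρ t) (ρ x) x := by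
  apply intervalIntegral.integral_hasDerivAt_right
    (rho_intInt hcont 0 x le_rfl hx.le)
    ⟨Ici 0, Ici_mem_nhds hx, hcont.aestronglyMeasurable measurableSet_Ici⟩
    (rho_contAt hcont hx)

include hcont hinit hode in
/-- Key identity: `u * ρ u = ∫_{u-1}^u ρ` for `u ≥ 1`. -/
lemma rho_identity {u : ℝ} (hu : 1 ≤ u) :
    u * ρ u = ∫ t in (u-1)..u, ρ t := by
  set H : ℝ → ℝ := fun y => ∫ t in (0:ℝ)..y, ρ t with hH
  set G : ℝ → ℝ := fun x => x * ρ x - (H x - H (x - 1)) with hG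
  have hHsub : ∀ x : ℝ, 1 ≤ x → H x - H (x-1) = ∫ t in (x-1)..x, ρ t := by
    intro x hx
    have := intervalIntegral.integral_add_adjacent_intervals
      (rho_intInt hcont 0 (x-1) le_rfl (by linarith))
      (rho_intInt hcont (x-1) x (by linarith) (by linarith))
    simp only [hH]; linarith [this]
  have hHone : ∀ y : ℝ, 0 ≤ y → y ≤ 1 → H y = y := by
    intro y h0 h1
    have h2 : (∫ t in (0:ℝ)..y, ρ t) = ∫ t in (0:ℝ)..y, (1:ℝ) := by
      apply intervalIntegral.integral_congr
      intro t ht; rw [uIcc_of_le h0] at ht; exact hinit t ht.1 (le_trans ht.2 h1)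
    simp only [hH]; rw [h2]; simp
  have hG1 : G 1 = 0 := by
    simp only [hG]
    rw [show (1:ℝ) - 1 = 0 from by ring, hHone 1 zero_le_one le_rfl,
      hHone 0 le_rfl zero_le_one, hinit 1 zero_le_one le_rfl]
    ring
  have hGd : ∀ x : ℝ, 1 < x → HasDerivAt G 0 x := by
    intro x hx
    have hx0 : (0:ℝ) < x := by linarith
    have h1 : HasDerivAt (fun y : ℝ => y * ρ y) (ρ x - ρ (x-1)) x := by
      have := (hasDerivAt_id' x).mul (hode x hx)
      refine this.congr_deriv ?_
      field_simp
      ring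
    have h2 : HasDerivAt H (ρ x) x := H_hasDeriv hcont hx0
    have h3 : HasDerivAt (fun y : ℝ => H (y - 1)) (ρ (x-1)) x := by
      have := (H_hasDeriv hcont (x := x - 1) (by linarith)).comp x
        ((hasDerivAt_id x).sub_const 1)
      exact this.congr_deriv (mul_one _)
    have := h1.sub (h2.sub h3)
    exact this.congr_deriv (by ring)
  -- continuity of G on [1, u]
  have hGc : ContinuousOn G (Icc 1 u) := by
    intro x hx
    rcases lt_or_eq_of_le hx.1 with h | h
    · exact (hGd x h).continuousAt.continuousWithinAt
    · subst h
      have c1 : ContinuousAt (fun y : ℝ => y * ρ y) 1 :=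
        continuousAt_id.mul (rho_contAt hcont zero_lt_one)
      have c2 : ContinuousAt H 1 := (H_hasDeriv hcont zero_lt_one).continuousAt
      have c3 : ContinuousWithinAt (fun y : ℝ => H (y - 1)) (Icc 1 u) 1 := by
        have heq : (fun y : ℝ => y - 1) =ᶠ[nhdsWithin 1 (Icc 1 u)] (fun y => H (y-1)) := by
          filter_upwards [nhdsWithin_le_nhds (Ioo_mem_nhds (by norm_num : (0:ℝ) < 1) one_lt_two),
            self_mem_nhdsWithin] with y hy hy'
          rw [hHone (y-1) (by linarith [hy'.1]) (by linarith [hy.2])]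
        apply ContinuousWithinAt.congr_of_eventuallyEq _ heq.symm
          (by rw [show (1:ℝ)-1 = 0 from by ring, hHone 0 le_rfl zero_le_one])
        exact (continuousAt_id.sub continuousAt_const).continuousWithinAt
      exact (c1.continuousWithinAt).sub ((c2.continuousWithinAt).sub c3)
  -- conclude G u = 0
  have key : G u = 0 := by
    rcases eq_or_lt_of_le hu with h | h
    · rw [← h]; exact hG1
    · have hconst : ∀ a ∈ Ioo (1:ℝ) u, G u = G a := by
        intro a ha
        have := constant_of_has_deriv_right_zero (f := G) (a := a) (b := u)
          (hGc.mono (Icc_subset_Icc ha.1.le le_rfl))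
          (fun x hxm => (hGd x (lt_of_lt_of_le ha.1 hxm.1)).hasDerivWithinAt)
          u ⟨ha.2.le, le_rfl⟩
        exact this
      have hne : (nhdsWithin (1:ℝ) (Ioo 1 u)).NeBot := by
        rw [← mem_closure_iff_nhdsWithin_neBot, closure_Ioo (ne_of_lt h)]
        exact ⟨le_rfl, hu⟩
      have t1 : Tendsto G (nhdsWithin (1:ℝ) (Ioo 1 u)) (nhds (G 1)) :=
        (hGc 1 ⟨le_rfl, hu⟩).mono_left (nhdsWithin_mono _ Ioo_subset_Icc_self)
      have t2 : Tendsto G (nhdsWithin (1:ℝ) (Ioo 1 u)) (nhds (G u)) := by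
        apply Tendsto.congr' _ tendsto_const_nhds
        filter_upwards [self_mem_nhdsWithin] with a ha
        exact hconst a ha
      rw [tendsto_nhds_unique t2 t1, hG1]
  have := hHsub u hu
  simp only [hG] at key
  linarith [key, this]

include hcont hinit hode in
/-- Positivity of ρ on [0, ∞). -/
lemma rho_pos : ∀ u : ℝ, 0 ≤ u → 0 < ρ u := by
  by_contra hcon
  push_neg at hcon
  obtain ⟨v, hv0, hvle⟩ := hcon
  set Z : Set ℝ := {x | 0 ≤ x ∧ ρ x ≤ 0} with hZ
  have hZclosed : IsClosed Z := by
    have : Z = Ici 0 ∩ (ρ ⁻¹' Iic 0) := by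
      ext x; simp only [hZ, mem_setOf_eq, mem_inter_iff, mem_Ici, mem_preimage, mem_Iic]
    rw [this]
    exact hcont.preimage_isClosed_of_isClosed isClosed_Ici isClosed_Iic
  have hZne : Z.Nonempty := ⟨v, hv0, hvle⟩
  have hZbdd : BddBelow Z := ⟨0, fun x hx => hx.1⟩
  set w := sInf Z with hw
  have hwZ : w ∈ Z := hZclosed.csInf_mem hZne hZbdd
  have hwlt : ∀ x : ℝ, 0 ≤ x → x < w → 0 < ρ x := by
    intro x hx hxw
    by_contra hc; push_neg at hc
    exact absurd (csInf_le hZbdd ⟨hx, hc⟩) (not_le.2 hxw)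
  have hw1 : 1 < w := by
    rcases le_or_gt w 1 with h | h
    · exfalso
      have := hinit w hwZ.1 h
      linarith [hwZ.2]
    · exact h
  have hid := rho_identity hcont hinit hode (le_of_lt hw1)
  have hpos : 0 < ∫ t in (w-1)..w, ρ t := by
    apply intervalIntegral.intervalIntegral_pos_of_pos_on
      (rho_intInt hcont (w-1) w (by linarith) (by linarith))
      _ (by linarith)
    intro x hx
    exact hwlt x (by linarith [hx.1]) hx.2
  nlinarith [hwZ.2, hid, hpos, hw1]

include hcont hinit hode in
/-- Explicit formula on [1,2]. -/
lemma rho_base {u : ℝ} (h1 : 1 ≤ u) (h2 : u ≤ 2) : ρ u = 1 - Real.log u := by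
  set K : ℝ → ℝ := fun x => ρ x + Real.log x with hK
  have hKd : ∀ x : ℝ, 1 < x → x < 2 → HasDerivAt K 0 x := by
    intro x hx hx2
    have hd : HasDerivAt K (-ρ (x-1)/x + x⁻¹) x :=
      (hode x hx).add (Real.hasDerivAt_log (by linarith))
    have hrho1 : ρ (x - 1) = 1 := hinit (x-1) (by linarith) (by linarith)
    rw [hrho1] at hd
    convert hd using 1
    field_simp
    ring
  have hKc : ContinuousOn K (Icc 1 u) := by
    intro x hx
    have hx0 : (0:ℝ) < x := by linarith [hx.1]
    exact ((rho_contAt hcont hx0).continuousWithinAt).add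
      ((Real.continuousAt_log (ne_of_gt hx0)).continuousWithinAt)
  have key : K u = K 1 := by
    rcases eq_or_lt_of_le h1 with h | h
    · rw [← h]
    · have hconst : ∀ a ∈ Ioo (1:ℝ) u, K u = K a := by
        intro a ha
        exact constant_of_has_deriv_right_zero (f := K) (a := a) (b := u)
          (hKc.mono (Icc_subset_Icc ha.1.le le_rfl))
          (fun x hxm => (hKd x (lt_of_lt_of_le ha.1 hxm.1)
            (lt_of_lt_of_le hxm.2 h2)).hasDerivWithinAt)
          u ⟨ha.2.le, le_rfl⟩
      have hne : (nhdsWithin (1:ℝ) (Ioo 1 u)).NeBot := by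
        rw [← mem_closure_iff_nhdsWithin_neBot, closure_Ioo (ne_of_lt h)]
        exact ⟨le_rfl, h1⟩
      have t1 : Tendsto K (nhdsWithin (1:ℝ) (Ioo 1 u)) (nhds (K 1)) :=
        (hKc 1 ⟨le_rfl, h1⟩).mono_left (nhdsWithin_mono _ Ioo_subset_Icc_self)
      have t2 : Tendsto K (nhdsWithin (1:ℝ) (Ioo 1 u)) (nhds (K u)) := by
        apply Tendsto.congr' _ tendsto_const_nhds
        filter_upwards [self_mem_nhdsWithin] with a ha
        exact hconst a ha
      exact tendsto_nhds_unique t2 t1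
  simp only [hK] at key
  rw [hinit 1 zero_le_one le_rfl, Real.log_one] at key
  linarith

set_option maxHeartbeats 1600000 in
include hcont hinit hode in
/-- Induction step: if the bound holds below `w`, it holds strictly at `w ≥ 2`. -/
lemma step_lemma {w : ℝ} (hw : 2 ≤ w)
    (IH : ∀ s : ℝ, 1 < s → s < w → ρ (s-1) ≤ Lf s * (s * ρ s)) :
    ρ (w-1) < Lf w * (w * ρ w) := by
  set L := Lf w with hLdef
  set lm := lam w with hlmdef
  have hw0 : (0:ℝ) < w := by linarith
  have hl0 : (0:ℝ) < Real.log (w+3) := Real.log_pos (by linarith)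
  set G : ℝ := 2*w*(Real.log (w+3))^2 with hGdef
  have hG0 : (0:ℝ) < G := by rw [hGdef]; positivity
  have hLlog : L = Real.log G := by rw [hLdef, hGdef, Lf]
  have hL0 : (0:ℝ) < L := by
    have := Lf_lower (le_trans one_le_two hw)
    have h0 : (0:ℝ) ≤ Real.log w := Real.log_nonneg (by linarith)
    rw [hLdef]; linarith
  have hlm0 : (0:ℝ) < lm := by rw [hlmdef, lam]; positivity
  have hrw1 : (0:ℝ) < ρ (w-1) := rho_pos hcont hinit hode (w-1) (by linarith)
  -- the Gronwall exponent and its derivative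
  set Θ : ℝ → ℝ := fun t => L*(t-w+1) - lm*((t-w+1) - (t-w+1)^2/2) with hΘ
  set Θd : ℝ → ℝ := fun t => L - lm*(w-t) with hΘd
  have hΘderiv : ∀ t : ℝ, HasDerivAt Θ (Θd t) t := by
    intro t
    have h1 : HasDerivAt (fun t : ℝ => t - w + 1) 1 t := by
      simpa using ((hasDerivAt_id t).sub_const w).add_const 1
    have h2 : HasDerivAt (fun t : ℝ => L*(t-w+1)) L t := by
      simpa using h1.const_mul L
    have h3 : HasDerivAt (fun t : ℝ => (t-w+1) - (t-w+1)^2/2) (1 - (t-w+1)) t := by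
      have hsq : HasDerivAt (fun t : ℝ => (t-w+1)^2) (2*(t-w+1)) t := by
        have := h1.pow 2
        simpa [Pi.pow_def] using this
      have := h1.sub (hsq.div_const 2)
      refine this.congr_deriv ?_
      ring
    have h4 : HasDerivAt (fun t : ℝ => lm*((t-w+1) - (t-w+1)^2/2)) (lm*(1 - (t-w+1))) t :=
      h3.const_mul lm
    have := h2.sub h4
    refine this.congr_deriv ?_
    rw [hΘd]; ring
  have hΘw1 : Θ (w-1) = 0 := by rw [hΘ]; ring_nf
  -- Gronwall: ρ t ≥ ρ(w-1) * exp (-Θ t) on [w-1, w]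
  set hfun : ℝ → ℝ := fun t => ρ t * Real.exp (Θ t) with hhfun
  have hmono : MonotoneOn hfun (Icc (w-1) w) := by
    apply monotoneOn_of_deriv_nonneg (convex_Icc _ _)
    · have hsub : Icc (w-1) w ⊆ Ici (0:ℝ) := fun y hy => by
        simp only [mem_Icc] at hy; simp only [mem_Ici]; linarith [hy.1]
      have cΘ : Continuous Θ := by
        simp only [hΘ]; fun_prop
      exact (hcont.mono hsub).mul (Real.continuous_exp.comp cΘ).continuousOn
    · intro t ht
      rw [interior_Icc] at ht
      have ht1 : (1:ℝ) < t := by linarith [ht.1]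
      exact ((hode t ht1).mul ((hΘderiv t).exp)).differentiableAt.differentiableWithinAt
    · intro t ht
      rw [interior_Icc] at ht
      have ht1 : (1:ℝ) < t := by linarith [ht.1]
      have ht0 : (0:ℝ) < t := by linarith
      have hd : HasDerivAt hfun ((-ρ (t-1)/t) * Real.exp (Θ t)
          + ρ t * (Real.exp (Θ t) * Θd t)) t := (hode t ht1).mul ((hΘderiv t).exp)
      rw [hd.deriv]
      have hkey : ρ (t-1)/t ≤ ρ t * Θd t := by
        have hIH := IH t ht1 ht.2
        have hLt : Lf t ≤ L - (w - t)*lm := by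
          have := Lf_linear hw (by linarith [ht.1] : w - 1 ≤ t) ht.2.le
          rw [← hLdef, ← hlmdef] at this
          linarith
        have hρt : (0:ℝ) < ρ t := rho_pos hcont hinit hode t (by linarith)
        have h1 : ρ (t-1)/t ≤ Lf t * ρ t := by
          rw [div_le_iff₀ ht0]
          calc ρ (t-1) ≤ Lf t * (t * ρ t) := hIH
            _ = Lf t * ρ t * t := by ring
        calc ρ (t-1)/t ≤ Lf t * ρ t := h1
          _ ≤ (L - (w-t)*lm) * ρ t := by
              apply mul_le_mul_of_nonneg_right hLt hρt.le
          _ = ρ t * Θd t := by rw [hΘd]; ring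
      have hexp : (0:ℝ) < Real.exp (Θ t) := Real.exp_pos _
      have : (-ρ (t-1)/t) * Real.exp (Θ t) + ρ t * (Real.exp (Θ t) * Θd t)
          = (ρ t * Θd t - ρ (t-1)/t) * Real.exp (Θ t) := by ring
      rw [this]
      exact mul_nonneg (by linarith) hexp.le
  have hGron : ∀ t ∈ Icc (w-1) w, ρ (w-1) * Real.exp (-Θ t) ≤ ρ t := by
    intro t ht
    have hh := hmono (left_mem_Icc.2 (by linarith)) ht ht.1
    simp only [hhfun] at hh
    rw [hΘw1, Real.exp_zero, mul_one] at hh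
    have hexp : (0:ℝ) < Real.exp (Θ t) := Real.exp_pos _
    rw [Real.exp_neg]
    calc ρ (w-1) * (Real.exp (Θ t))⁻¹ ≤ (ρ t * Real.exp (Θ t)) * (Real.exp (Θ t))⁻¹ :=
          mul_le_mul_of_nonneg_right hh (by positivity)
      _ = ρ t := by field_simp
  -- explicit antiderivative
  set c : ℝ := lm/(2*L) with hc
  set b : ℝ := lm*(1-L)/L^2 with hb
  set a : ℝ := (b-1)/L with ha
  set A : ℝ → ℝ := fun t => Real.exp (-(L*(t-w+1))) * (a + b*(t-w+1) + c*(t-w+1)^2) with hA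
  set F : ℝ → ℝ := fun t => Real.exp (-(L*(t-w+1))) * (1 + lm*((t-w+1) - (t-w+1)^2/2)) with hF
  have hAderiv : ∀ t : ℝ, HasDerivAt A (F t) t := by
    intro t
    have h1 : HasDerivAt (fun t : ℝ => t - w + 1) 1 t := by
      simpa using ((hasDerivAt_id t).sub_const w).add_const 1
    have h2 : HasDerivAt (fun t : ℝ => -(L*(t-w+1))) (-L) t := by
      simpa [Pi.neg_def] using (h1.const_mul L).neg
    have h3 : HasDerivAt (fun t : ℝ => Real.exp (-(L*(t-w+1)))) (Real.exp (-(L*(t-w+1))) * (-L)) t :=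
      h2.exp
    have h4 : HasDerivAt (fun t : ℝ => a + b*(t-w+1) + c*(t-w+1)^2) (b + c*(2*(t-w+1))) t := by
      have hsq : HasDerivAt (fun t : ℝ => (t-w+1)^2) (2*(t-w+1)) t := by
        simpa [Pi.pow_def] using h1.pow 2
      have := ((h1.const_mul b).const_add a).add (hsq.const_mul c)
      refine this.congr_deriv ?_
      ring
    have := h3.mul h4
    refine this.congr_deriv ?_
    rw [hF]
    have hL' : L ≠ 0 := ne_of_gt hL0
    rw [ha, hb, hc]
    field_simp [hc, hb, ha]
    ring
  have hint : (∫ t in (w-1)..w, F t) = A w - A (w-1) := by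
    apply intervalIntegral.integral_eq_sub_of_hasDerivAt
    · intro t _; exact hAderiv t
    · apply Continuous.intervalIntegrable
      rw [hF]
      fun_prop
  -- pointwise F ≤ exp(-Θ)
  have hFle : ∀ t ∈ Icc (w-1) w, ρ (w-1) * F t ≤ ρ t := by
    intro t ht
    have h1 : F t ≤ Real.exp (-Θ t) := by
      rw [hF, hΘ]
      have e1 : -(L*(t-w+1) - lm*((t-w+1) - (t-w+1)^2/2))
          = -(L*(t-w+1)) + lm*((t-w+1) - (t-w+1)^2/2) := by ring
      rw [e1, Real.exp_add]
      apply mul_le_mul_of_nonneg_left _ (Real.exp_pos _).le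
      calc 1 + lm*((t-w+1) - (t-w+1)^2/2)
          = lm*((t-w+1) - (t-w+1)^2/2) + 1 := by ring
        _ ≤ Real.exp (lm*((t-w+1) - (t-w+1)^2/2)) := Real.add_one_le_exp _
    calc ρ (w-1) * F t ≤ ρ (w-1) * Real.exp (-Θ t) :=
          mul_le_mul_of_nonneg_left h1 hrw1.le
      _ ≤ ρ t := hGron t ht
  -- integrate
  have hId := rho_identity hcont hinit hode (by linarith : (1:ℝ) ≤ w)
  have hcompare : ρ (w-1) * (A w - A (w-1)) ≤ w * ρ w := by
    rw [hId, ← hint]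
    have : (∫ t in (w-1)..w, ρ (w-1) * F t) = ρ (w-1) * ∫ t in (w-1)..w, F t := by
      exact intervalIntegral.integral_const_mul _ _
    rw [← this]
    apply intervalIntegral.integral_mono_on (by linarith)
    · apply Continuous.intervalIntegrable
      rw [hF]; fun_prop
    · exact rho_intInt hcont (w-1) w (by linarith) (by linarith)
    · exact hFle
  -- numeric: A w - A (w-1) > 1/L
  have hAval : A w - A (w-1) = (1/G)*(a+b+c) - a := by
    simp only [hA]
    have eexp : Real.exp (-L) = 1/G := by
      rw [Real.exp_neg, hLlog, Real.exp_log hG0, one_div]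
    have e1 : -(L*(w-w+1)) = -L := by ring
    have e2 : -(L*(w-1-w+1)) = -(L*0) := by ring
    rw [e1, e2, eexp]
    norm_num
  have hnum : 1/L < A w - A (w-1) := by
    rw [hAval]
    have hkey := key_numeric hw
    rw [← hLdef, ← hlmdef, ← hGdef] at hkey
    -- multiply key by 1/G
    have hkey2 : lm * ((L-1) - (1/G)*(L^2/2 - 1)) > (1/G)*L^2 := by
      have h3 : lm * ((L - 1) * G - (L^2/2 - 1)) * (1/G) > L^2 * (1/G) := by
        apply mul_lt_mul_of_pos_right hkey (by positivity)
      calc (1/G)*L^2 = L^2 * (1/G) := by ring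
        _ < lm * ((L - 1) * G - (L^2/2 - 1)) * (1/G) := h3
        _ = lm * ((L-1) * (G * (1/G)) - (1/G)*(L^2/2 - 1)) := by ring
        _ = lm * ((L-1) - (1/G)*(L^2/2 - 1)) := by
            rw [mul_one_div_cancel (ne_of_gt hG0), mul_one]
    have hSval : (1/G)*(a+b+c) - a - 1/L
        = (lm*((L-1) - (1/G)*(L^2/2-1)) - (1/G)*L^2)/L^3 := by
      rw [ha, hb, hc]
      field_simp
      ring
    have hpos : 0 < (lm*((L-1) - (1/G)*(L^2/2-1)) - (1/G)*L^2)/L^3 := by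
      apply div_pos (by linarith) (by positivity)
    linarith [hSval ▸ hpos]
  -- conclude
  have h1 : ρ (w-1) * (1/L) < ρ (w-1) * (A w - A (w-1)) :=
    mul_lt_mul_of_pos_left hnum hrw1
  have h2 : ρ (w-1) * (1/L) < w * ρ w := lt_of_lt_of_le h1 hcompare
  calc ρ (w-1) = L * (ρ (w-1) * (1/L)) := by field_simp
    _ < L * (w * ρ w) := by
        apply mul_lt_mul_of_pos_left h2 hL0

set_option maxHeartbeats 800000 in
include hcont hinit hode in
lemma xi_le : ∀ u : ℝ, 1 < u → ρ (u-1) ≤ Lf u * (u * ρ u) := by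
  have hbase : ∀ s : ℝ, 1 < s → s ≤ 2 → ρ (s-1) ≤ Lf s * (s * ρ s) := by
    intro s h1 h2
    have hρs : ρ s = 1 - Real.log s := rho_base hcont hinit hode h1.le h2
    have hρs1 : ρ (s-1) = 1 := hinit (s-1) (by linarith) (by linarith)
    rw [hρs, hρs1]
    calc (1:ℝ) ≤ s * ((1 - Real.log s) * Lf s) := base_numeric h1 h2
      _ = Lf s * (s * (1 - Real.log s)) := by ring
  intro u hu
  by_contra hcon
  push_neg at hcon
  set F : Set ℝ := {x | 2 < x ∧ Lf x * (x * ρ x) < ρ (x-1)} with hF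
  have hFne : F.Nonempty := by
    refine ⟨u, ?_, hcon⟩
    by_contra hle; push_neg at hle
    exact absurd (hbase u hu hle) (not_le.2 hcon)
  have hFbdd : BddBelow F := ⟨2, fun x hx => hx.1.le⟩
  set u₀ := sInf F with hu₀
  have hu₀2 : 2 ≤ u₀ := le_csInf hFne (fun x hx => hx.1.le)
  have hIH : ∀ s : ℝ, 1 < s → s < u₀ → ρ (s-1) ≤ Lf s * (s * ρ s) := by
    intro s h1 h2
    rcases le_or_gt s 2 with h | h
    · exact hbase s h1 h
    · by_contra hc; push_neg at hc
      exact absurd (csInf_le hFbdd ⟨h, hc⟩) (not_le.2 h2)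
  have hstep := step_lemma hcont hinit hode hu₀2 hIH
  have hpos : 0 < Lf u₀ * (u₀ * ρ u₀) - ρ (u₀-1) := by linarith
  have hcontg : ContinuousAt (fun x => Lf x * (x * ρ x) - ρ (x-1)) u₀ := by
    have c1 : ContinuousAt ρ u₀ := rho_contAt hcont (by linarith)
    have c2 : ContinuousAt (fun x : ℝ => ρ (x-1)) u₀ := by
      have h1 : ContinuousAt (fun x : ℝ => x - 1) u₀ :=
        continuousAt_id.sub continuousAt_const
      exact ContinuousAt.comp (x := u₀) (g := ρ) (f := fun x : ℝ => x - 1)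
        (rho_contAt hcont (x := u₀ - 1) (by linarith)) h1
    have c4 : ContinuousAt (fun x : ℝ => 2*x*(Real.log (x+3))^2) u₀ := by
      apply ContinuousAt.mul
      · exact continuousAt_const.mul continuousAt_id
      · have h6 : ContinuousAt (fun x : ℝ => Real.log (x+3)) u₀ :=
          ContinuousAt.comp (x := u₀) (g := Real.log) (f := fun x : ℝ => x + 3)
            (Real.continuousAt_log (by linarith : (0:ℝ) < u₀+3).ne')
            (continuousAt_id.add continuousAt_const)
        exact h6.pow 2
    have hne : (2*u₀*(Real.log (u₀+3))^2) ≠ 0 := by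
      have : (0:ℝ) < Real.log (u₀+3) := Real.log_pos (by linarith)
      positivity
    have c3 : ContinuousAt Lf u₀ := by
      have h5 : ContinuousAt (fun x : ℝ => Real.log (2*x*(Real.log (x+3))^2)) u₀ :=
        ContinuousAt.comp (x := u₀) (g := Real.log)
          (f := fun x : ℝ => 2*x*(Real.log (x+3))^2) (Real.continuousAt_log hne) c4
      have heq : Lf = fun x : ℝ => Real.log (2*x*(Real.log (x+3))^2) := rfl
      rw [heq]
      exact h5
    exact (c3.mul (continuousAt_id.mul c1)).sub c2
  have hev : ∀ᶠ x in nhds u₀, 0 < Lf x * (x * ρ x) - ρ (x-1) :=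
    hcontg.eventually (eventually_gt_nhds hpos)
  obtain ⟨ε, hε, hball⟩ := Metric.eventually_nhds_iff.1 hev
  obtain ⟨x, hxF, hxlt⟩ := Real.lt_sInf_add_pos hFne hε
  have hx0 : u₀ ≤ x := csInf_le hFbdd hxF
  have hdist : dist x u₀ < ε := by
    rw [Real.dist_eq, abs_of_nonneg (by linarith)]
    rw [← hu₀] at hxlt
    linarith
  have h7 := hball hdist
  have h8 := hxF.2
  linarith

end Dickman

theorem stmt_6 (ρ : ℝ → ℝ)
    (hcont : ContinuousOn ρ (Set.Ici 0))
    (hneg : ∀ u : ℝ, u < 0 → ρ u = 0)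
    (hinit : ∀ u : ℝ, 0 ≤ u → u ≤ 1 → ρ u = 1)
    (hode : ∀ u : ℝ, 1 < u → HasDerivAt ρ (-ρ (u - 1) / u) u) :
    ∀ u : ℝ, 1 < u →
      -deriv ρ u ≤ ρ u * Real.log (2 * u * (Real.log (u + 3)) ^ 2) := by
  intro u hu
  have hu0 : (0:ℝ) < u := by linarith
  have hd : deriv ρ u = -ρ (u-1)/u := (hode u hu).deriv
  rw [hd]
  have hxi := xi_le hcont hinit hode u hu
  rw [Lf] at hxi
  have : -(-ρ (u-1)/u) = ρ (u-1)/u := by ring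
  rw [this, div_le_iff₀ hu0]
  calc ρ (u-1) ≤ Real.log (2*u*(Real.log (u+3))^2) * (u * ρ u) := hxi
    _ = ρ u * Real.log (2*u*(Real.log (u+3))^2) * u := by ring
end

section
/- Let δ, Δ > 0 and let f : (0,∞) → (0,∞) be a decreasing function with f(u) < 1/6 for all u ≥ 1/2. Suppose δ : [0,∞) → (0,∞) is decreasing, δ(u) ≥ Δ for 0 ≤ u ≤ 1, and for every u > 1, δ(u) ≥ min(Δ, δ(u − 1/2)) · e^{−6 f(u − 1/2)}. Then for every u ≥ 0, δ(u) ≥ Δ · exp(−6 · ∑_{k=0}^{2⌊u⌋} f((k+1)/2)). -/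
theorem stmt_17 (Δ : ℝ) (hΔ : 0 < Δ) (f δ : ℝ → ℝ)
    (hfpos : ∀ u : ℝ, 0 < u → 0 < f u)
    (hfdec : AntitoneOn f (Set.Ioi 0))
    (hfsmall : ∀ u : ℝ, (1/2 : ℝ) ≤ u → f u < 1/6)
    (hδpos : ∀ u : ℝ, 0 ≤ u → 0 < δ u)
    (hδdec : AntitoneOn δ (Set.Ici 0))
    (hbase : ∀ u : ℝ, 0 ≤ u → u ≤ 1 → Δ ≤ δ u)
    (hrec : ∀ u : ℝ, 1 < u →
      min Δ (δ (u - 1/2)) * Real.exp (-6 * f (u - 1/2)) ≤ δ u) :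
    ∀ u : ℝ, 0 ≤ u →
      Δ * Real.exp (-6 * ∑ k ∈ Finset.range (2 * ⌊u⌋₊ + 1), f ((k + 1) / 2))
        ≤ δ u := by
  have hS : ∀ n : ℕ, 0 ≤ ∑ k ∈ Finset.range n, f (((k : ℝ) + 1) / 2) := by
    intro n
    apply Finset.sum_nonneg
    intro k _
    exact le_of_lt (hfpos _ (by positivity))
  have hSmono : ∀ m n : ℕ, m ≤ n →
      ∑ k ∈ Finset.range m, f (((k : ℝ) + 1) / 2) ≤
        ∑ k ∈ Finset.range n, f (((k : ℝ) + 1) / 2) := by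
    intro m n hmn
    apply Finset.sum_le_sum_of_subset_of_nonneg (Finset.range_subset_range.mpr hmn)
    intro k _ _
    exact le_of_lt (hfpos _ (by positivity))
  have hexp1 : ∀ n : ℕ, Real.exp (-6 * ∑ k ∈ Finset.range n, f (((k : ℝ) + 1) / 2)) ≤ 1 := by
    intro n
    apply Real.exp_le_one_iff.mpr
    nlinarith [hS n]
  have aux : ∀ n : ℕ, ∀ u : ℝ, 0 ≤ u → 2 * u ≤ n + 2 →
      Δ * Real.exp (-6 * ∑ k ∈ Finset.range n, f (((k : ℝ) + 1) / 2)) ≤ δ u := by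
    intro n
    induction n using Nat.strong_induction_on with
    | _ n IH =>
      intro u hu hun
      by_cases h1 : u ≤ 1
      · calc Δ * Real.exp (-6 * ∑ k ∈ Finset.range n, f (((k : ℝ) + 1) / 2))
            ≤ Δ * 1 := mul_le_mul_of_nonneg_left (hexp1 n) hΔ.le
          _ = Δ := mul_one Δ
          _ ≤ δ u := hbase u hu h1
      · push_neg at h1
        have hn1 : 1 ≤ n := by
          by_contra h
          push_neg at h
          interval_cases n
          push_cast at hun
          linarith
        obtain ⟨m, hmn, hm1, hm2⟩ : ∃ m : ℕ, m < n ∧ (m : ℝ) ≤ 2 * u - 2 ∧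
            2 * u - 1 ≤ (m : ℝ) + 2 := by
          by_cases hc : ⌊2 * u - 2⌋₊ < n
          · exact ⟨⌊2 * u - 2⌋₊, hc, Nat.floor_le (by linarith), by
              have := Nat.lt_floor_add_one (2 * u - 2); linarith⟩
          · push_neg at hc
            refine ⟨n - 1, Nat.sub_lt hn1 one_pos, ?_, ?_⟩
            · have h2 : ((n : ℕ) : ℝ) ≤ (⌊2 * u - 2⌋₊ : ℝ) := by exact_mod_cast hc
              have h3 : (⌊2 * u - 2⌋₊ : ℝ) ≤ 2 * u - 2 := Nat.floor_le (by linarith)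
              have h4 : ((n - 1 : ℕ) : ℝ) ≤ (n : ℝ) := by exact_mod_cast Nat.sub_le n 1
              linarith
            · have h4 : ((n - 1 : ℕ) : ℝ) = (n : ℝ) - 1 := by
                have : ((n - 1 : ℕ) : ℝ) = (n : ℝ) - ((1:ℕ):ℝ) := Nat.cast_sub hn1
                simpa using this
              rw [h4]
              linarith
        have hu2 : (0 : ℝ) ≤ u - 1 / 2 := by linarith
        have hIH := IH m hmn (u - 1 / 2) hu2 (by push_cast; linarith)
        have hminle : Δ * Real.exp (-6 * ∑ k ∈ Finset.range m, f (((k : ℝ) + 1) / 2)) ≤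
            min Δ (δ (u - 1 / 2)) := by
          refine le_min ?_ hIH
          nlinarith [hexp1 m, Real.exp_pos (-6 * ∑ k ∈ Finset.range m, f (((k : ℝ) + 1) / 2))]
        have hf : f (u - 1 / 2) ≤ f (((m : ℝ) + 1) / 2) := by
          apply hfdec (Set.mem_Ioi.mpr (by positivity)) (Set.mem_Ioi.mpr (by linarith))
          linarith
        have key : -6 * ∑ k ∈ Finset.range n, f (((k : ℝ) + 1) / 2) ≤
            (-6 * ∑ k ∈ Finset.range m, f (((k : ℝ) + 1) / 2)) + (-6 * f (u - 1 / 2)) := by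
          have h5 := hSmono (m + 1) n hmn
          rw [Finset.sum_range_succ] at h5
          linarith
        calc Δ * Real.exp (-6 * ∑ k ∈ Finset.range n, f (((k : ℝ) + 1) / 2))
            ≤ Δ * (Real.exp (-6 * ∑ k ∈ Finset.range m, f (((k : ℝ) + 1) / 2)) *
              Real.exp (-6 * f (u - 1 / 2))) := by
              rw [← Real.exp_add]
              exact mul_le_mul_of_nonneg_left (Real.exp_le_exp.mpr key) hΔ.le
          _ = (Δ * Real.exp (-6 * ∑ k ∈ Finset.range m, f (((k : ℝ) + 1) / 2))) *
              Real.exp (-6 * f (u - 1 / 2)) := by ring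
          _ ≤ min Δ (δ (u - 1 / 2)) * Real.exp (-6 * f (u - 1 / 2)) :=
              mul_le_mul_of_nonneg_right hminle (Real.exp_pos _).le
          _ ≤ δ u := hrec u h1
  intro u hu
  have h := aux (2 * ⌊u⌋₊ + 1) u hu (by
    have := Nat.lt_floor_add_one u
    push_cast
    linarith)
  convert h using 4
end
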